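/- arXiv:math/0101030 — 4 statements merged into one kernel-verified Lean document; each statement's English description precedes it below -/
import Mathlib

section
/- Let A be a group generated by a finite set {a_1, …, a_k}, and let f : A → B and g : B → A be group homomorphisms with f ∘ g = id_B. Then ker(f) equals the normal closure in A of the finite set { a_i · (g ∘ f)(a_i⁻¹) : 1 ≤ i ≤ k }. In particular, if A is finitely generated then ker(f) is the normal closure of a finite subset of A. -/
/-- **Lemma gp3 (Wall), first part.** If `A` is generated by `a 1, …, a k`, and
`f : A →* B`, `g : B →* A` satisfy `f ∘ g = id`, then `ker f` is the normal closure of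
the finite set `{ a i * (g ∘ f)(a i⁻¹) }`. -/
theorem ker_eq_normalClosure_of_retract
    {A B : Type*} [Group A] [Group B] {k : ℕ} (a : Fin k → A)
    (hgen : Subgroup.closure (Set.range a) = ⊤)
    (f : A →* B) (g : B →* A) (hfg : f.comp g = MonoidHom.id B) :
    f.ker = Subgroup.normalClosure (Set.range fun i => a i * g (f (a i)⁻¹)) := by
  set N := Subgroup.normalClosure (Set.range fun i => a i * g (f (a i)⁻¹)) with hN
  have hgf : ∀ b : B, f (g b) = b := fun b => DFunLike.congr_fun hfg b
  apply le_antisymm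
  · -- ker f ≤ N
    haveI : N.Normal := Subgroup.normalClosure_normal
    intro x hx
    have hx1 : f x = 1 := hx
    -- the two homs mk' N ∘ (g ∘ f) and mk' N agree on generators, hence everywhere
    have hagree : (QuotientGroup.mk' N).comp (g.comp f) = QuotientGroup.mk' N := by
      have h1 : Subgroup.closure (Set.range a) ≤
          MonoidHom.eqLocus ((QuotientGroup.mk' N).comp (g.comp f)) (QuotientGroup.mk' N) := by
        apply (Subgroup.closure_le _).2
        rintro _ ⟨i, rfl⟩
        show (QuotientGroup.mk (g (f (a i))) : A ⧸ N) = QuotientGroup.mk (a i)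
        rw [QuotientGroup.eq]
        have : a i * g (f (a i)⁻¹) ∈ N :=
          Subgroup.subset_normalClosure ⟨i, rfl⟩
        have h2 := ‹N.Normal›.conj_mem _ this (a i)⁻¹
        simpa [map_inv, mul_assoc] using h2
      ext x
      have := h1 (hgen ▸ Subgroup.mem_top x)
      exact this
    have : (QuotientGroup.mk' N) x = 1 := by
      calc (QuotientGroup.mk' N) x = ((QuotientGroup.mk' N).comp (g.comp f)) x := by
            rw [hagree]
        _ = QuotientGroup.mk (g (f x)) := rfl
        _ = 1 := by rw [hx1]; simp
    exact (QuotientGroup.eq_one_iff x).1 this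
  · -- N ≤ ker f
    apply Subgroup.normalClosure_le_normal
    rintro _ ⟨i, rfl⟩
    show f (a i * g (f (a i)⁻¹)) = 1
    rw [map_mul, hgf, map_inv, mul_inv_cancel]
end

section
/- Let A be a finitely presented group, and suppose there exist group homomorphisms f : A → B and g : B → A with f ∘ g = id_B. Then B is finitely presented. -/
/-- A group is finitely presented if it is isomorphic to the quotient of a free group on
finitely many generators by the normal closure of a finite set of relators. -/
def FinitelyPresentedGroup (G : Type*) [Group G] : Prop :=
  ∃ (n : ℕ) (R : Set (FreeGroup (Fin n))), R.Finite ∧ Nonempty (G ≃* PresentedGroup R)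

/-- **Lemma gp3 (Wall), second part.** A retract of a finitely presented group is
finitely presented. -/
theorem finitelyPresented_of_retract
    {A B : Type*} [Group A] [Group B]
    (hA : FinitelyPresentedGroup A)
    (f : A →* B) (g : B →* A) (hfg : f.comp g = MonoidHom.id B) :
    FinitelyPresentedGroup B := by
  obtain ⟨n, R, hRfin, ⟨e⟩⟩ := hA
  classical
  -- the projection FreeGroup (Fin n) →* A
  set φ : FreeGroup (Fin n) →* A :=
    (e.symm.toMonoidHom).comp (PresentedGroup.mk R) with hφdef
  have hφsurj : Function.Surjective φ :=
    e.symm.surjective.comp (PresentedGroup.mk_surjective R)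
  -- the retraction on A
  set r : A →* A := g.comp f with hrdef
  have hfr : f.comp r = f := by
    rw [hrdef, ← MonoidHom.comp_assoc, hfg, MonoidHom.id_comp]
  -- choose lifts of r (φ (of i))
  have hw : ∀ i : Fin n, ∃ w : FreeGroup (Fin n), φ w = r (φ (FreeGroup.of i)) :=
    fun i => hφsurj _
  choose w hwspec using hw
  set ρ : FreeGroup (Fin n) →* FreeGroup (Fin n) := FreeGroup.lift w with hρdef
  have hφρ : φ.comp ρ = r.comp φ := by
    apply FreeGroup.ext_hom
    intro i
    simp [hρdef, hwspec i]
  -- the new relator set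
  set S : Set (FreeGroup (Fin n)) :=
    R ∪ Set.range (fun i : Fin n => (FreeGroup.of i)⁻¹ * ρ (FreeGroup.of i)) with hSdef
  have hSfin : S.Finite := hRfin.union (Set.finite_range _)
  -- relators of R map to 1 under φ
  have hφR : ∀ x ∈ R, φ x = 1 := by
    intro x hx
    have : PresentedGroup.mk R x = 1 := by
      apply (QuotientGroup.eq_one_iff x).2
      exact Subgroup.subset_normalClosure hx
    simp [hφdef, this]
  -- relators of S map to 1 in PresentedGroup S
  have hSker : ∀ x ∈ S, PresentedGroup.mk S x = 1 := fun x hx =>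
    (QuotientGroup.eq_one_iff x).2 (Subgroup.subset_normalClosure hx)
  -- homomorphism PresentedGroup S →* B
  have hliftfφ : FreeGroup.lift (fun i : Fin n => f (φ (FreeGroup.of i))) = f.comp φ := by
    apply FreeGroup.ext_hom; intro i; simp
  have hψh : ∀ x ∈ S, FreeGroup.lift (fun i : Fin n => f (φ (FreeGroup.of i))) x = 1 := by
    intro x hx
    rw [hliftfφ]
    rcases hx with hx | ⟨i, rfl⟩
    · simp [hφR x hx]
    · have h1 : φ (ρ (FreeGroup.of i)) = r (φ (FreeGroup.of i)) := by
        have := DFunLike.congr_fun hφρ (FreeGroup.of i)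
        simpa using this
      have h2 : f (r (φ (FreeGroup.of i))) = f (φ (FreeGroup.of i)) := by
        have := DFunLike.congr_fun hfr (φ (FreeGroup.of i))
        simpa using this
      simp [h1, h2]
  set ψ : PresentedGroup S →* B := PresentedGroup.toGroup hψh with hψdef
  have hψmk : ∀ x : FreeGroup (Fin n), ψ (PresentedGroup.mk S x) = f (φ x) := by
    intro x
    have : ψ.comp (PresentedGroup.mk S) = f.comp φ := by
      apply FreeGroup.ext_hom
      intro i
      show ψ (PresentedGroup.mk S (FreeGroup.of i)) = f (φ (FreeGroup.of i))
      exact PresentedGroup.toGroup.of hψh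
    exact DFunLike.congr_fun this x
  -- homomorphism PresentedGroup R →* PresentedGroup S
  have hχh : ∀ x ∈ R, FreeGroup.lift (fun i : Fin n => (PresentedGroup.of i : PresentedGroup S)) x
      = 1 := by
    intro x hx
    have hl : FreeGroup.lift (fun i : Fin n => (PresentedGroup.of i : PresentedGroup S))
        = PresentedGroup.mk S := by
      apply FreeGroup.ext_hom; intro i; simp [PresentedGroup.of]
    rw [hl]
    exact hSker x (Or.inl hx)
  set χ : A →* PresentedGroup S := (PresentedGroup.toGroup hχh).comp e.toMonoidHom with hχdef
  have hχφ : χ.comp φ = PresentedGroup.mk S := by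
    apply FreeGroup.ext_hom
    intro i
    simp [hχdef, hφdef, PresentedGroup.mk, PresentedGroup.of]
    have : (PresentedGroup.toGroup hχh) (PresentedGroup.of i) = PresentedGroup.of i :=
      PresentedGroup.toGroup.of hχh
    simpa [PresentedGroup.of, PresentedGroup.mk] using this
  have hχφ' : ∀ x, χ (φ x) = PresentedGroup.mk S x := fun x =>
    DFunLike.congr_fun hχφ x
  set θ : B →* PresentedGroup S := χ.comp g with hθdef
  -- ψ ∘ χ = f
  have hψχ : ∀ a : A, ψ (χ a) = f a := by
    intro a
    obtain ⟨x, rfl⟩ := hφsurj a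
    rw [hχφ' x, hψmk x]
  have left_inv : ∀ b : B, ψ (θ b) = b := by
    intro b
    have : f (g b) = b := DFunLike.congr_fun hfg b
    simp only [hθdef, MonoidHom.comp_apply]
    rw [hψχ, this]
  have right_inv : ∀ x : PresentedGroup S, θ (ψ x) = x := by
    intro x
    induction x with
    | H z =>
      rw [hψmk z, hθdef]
      simp only [MonoidHom.comp_apply]
      -- show χ (g (f (φ z))) = mk S z
      have key : (χ.comp (g.comp (f.comp φ))) = PresentedGroup.mk S := by
        apply FreeGroup.ext_hom
        intro i
        have h1 : g (f (φ (FreeGroup.of i))) = φ (ρ (FreeGroup.of i)) := by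
          have := DFunLike.congr_fun hφρ (FreeGroup.of i)
          simpa [hrdef] using this.symm
        have h2 : PresentedGroup.mk S ((FreeGroup.of i)⁻¹ * ρ (FreeGroup.of i)) = 1 :=
          hSker _ (Or.inr ⟨i, rfl⟩)
        have h3 : PresentedGroup.mk S (ρ (FreeGroup.of i)) =
            PresentedGroup.mk S (FreeGroup.of i) := by
          have := h2
          rw [map_mul, map_inv] at this
          group at this ⊢
          exact (inv_mul_eq_one.mp this).symm
        simp only [MonoidHom.comp_apply]
        rw [h1, hχφ' _, h3]
      exact DFunLike.congr_fun key z
  refine ⟨n, S, hSfin, ⟨?_⟩⟩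
  exact
    { toFun := θ
      invFun := ψ
      left_inv := left_inv
      right_inv := right_inv
      map_mul' := map_mul θ }
end

section
/- Let A be a group which is generated by a set of cardinality m (m a natural number), and let B be a group admitting a presentation with a set of relators of cardinality n; that is, B is isomorphic to the quotient of a free group (on some set of generators) by the normal closure of a set of n relator words. Then for every surjective group homomorphism f : A → B, the kernel ker(f) is the normal closure in A of a subset of cardinality at most m + n. -/
lemma range_fin_append {γ : Type*} {m n : ℕ} (u : Fin m → γ) (v : Fin n → γ) :
    Set.range (Fin.append u v) = Set.range u ∪ Set.range v := by
  ext x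
  constructor
  · rintro ⟨i, rfl⟩
    refine Fin.addCases (fun j => ?_) (fun j => ?_) i
    · exact Or.inl ⟨j, (Fin.append_left u v j).symm⟩
    · exact Or.inr ⟨j, (Fin.append_right u v j).symm⟩
  · rintro (⟨j, rfl⟩ | ⟨j, rfl⟩)
    · exact ⟨Fin.castAdd n j, Fin.append_left u v j⟩
    · exact ⟨Fin.natAdd m j, Fin.append_right u v j⟩

/-- **Lemma gp4 (Siebenmann).** If `A` is generated by `m` elements and `B` admits a
presentation (on some set of generators `β`) with `n` relators, then the kernel of any
surjective homomorphism `f : A →* B` is the normal closure of a set of at most `m + n`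
elements. -/
theorem ker_normalClosure_of_surjective_onto_presented
    {A B : Type*} [Group A] [Group B] {m n : ℕ}
    (a : Fin m → A) (hgen : Subgroup.closure (Set.range a) = ⊤)
    (β : Type*) (rel : Fin n → FreeGroup β)
    (hpres : Nonempty (B ≃* PresentedGroup (Set.range rel)))
    (f : A →* B) (hf : Function.Surjective f) :
    ∃ t : Fin (m + n) → A, f.ker = Subgroup.normalClosure (Set.range t) := by
  obtain ⟨e⟩ := hpres
  -- π : FreeGroup β →* B
  set π : FreeGroup β →* B := e.symm.toMonoidHom.comp (PresentedGroup.mk (Set.range rel)) with hπ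
  have hπsurj : Function.Surjective π :=
    e.symm.surjective.comp (PresentedGroup.mk_surjective _)
  have hπrel : ∀ k : Fin n, π (rel k) = 1 := by
    intro k
    have : PresentedGroup.mk (Set.range rel) (rel k) = 1 := by
      rw [← MonoidHom.mem_ker, PresentedGroup.mk, MonoidHom.mem_ker]
      exact (QuotientGroup.eq_one_iff _).mpr
        (Subgroup.subset_normalClosure ⟨k, rfl⟩)
    simp [hπ, this]
  -- lift generators of B to A
  choose g hg using fun b : β => hf (π (FreeGroup.of b))
  set φ : FreeGroup β →* A := FreeGroup.lift g with hφ
  have hfφ : f.comp φ = π := by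
    apply FreeGroup.ext_hom
    intro b
    simp [hφ, hg]
  have hfφ' : ∀ x, f (φ x) = π x := fun x => DFunLike.congr_fun hfφ x
  -- lift f(aᵢ) along π
  choose w hw using fun i : Fin m => hπsurj (f (a i))
  set t1 : Fin m → A := fun i => a i * (φ (w i))⁻¹ with ht1
  set t2 : Fin n → A := fun k => φ (rel k) with ht2
  refine ⟨Fin.append t1 t2, ?_⟩
  rw [range_fin_append]
  set N := Subgroup.normalClosure (Set.range t1 ∪ Set.range t2) with hN
  have hNn : N.Normal := Subgroup.normalClosure_normal
  apply le_antisymm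
  · -- ker f ≤ N
    set q : A →* A ⧸ N := QuotientGroup.mk' N with hq
    have h1 : FreeGroup.lift (⇑q ∘ g) = q.comp φ := by
      apply FreeGroup.ext_hom; intro b; simp [hφ]
    have hqφrel : ∀ r ∈ Set.range rel, FreeGroup.lift (⇑q ∘ g) r = 1 := by
      rintro r ⟨k, rfl⟩
      rw [h1]
      show q (φ (rel k)) = 1
      rw [hq, ← MonoidHom.mem_ker, QuotientGroup.ker_mk']
      exact Subgroup.subset_normalClosure (Or.inr ⟨k, rfl⟩)
    set ψ : B →* A ⧸ N := (PresentedGroup.toGroup hqφrel).comp e.toMonoidHom with hψ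
    have key : ψ.comp f = q := by
      apply MonoidHom.eq_of_eqOn_dense hgen
      rintro x ⟨i, rfl⟩
      show ψ (f (a i)) = q (a i)
      have h2 : ψ (π (w i)) = q (φ (w i)) := by
        have h4 : (PresentedGroup.toGroup hqφrel) (PresentedGroup.mk (Set.range rel) (w i))
            = FreeGroup.lift (⇑q ∘ g) (w i) := rfl
        simp only [hψ, hπ, MonoidHom.comp_apply, MulEquiv.coe_toMonoidHom,
          MulEquiv.apply_symm_apply, h4, h1]
      have hmem : t1 i ∈ N := Subgroup.subset_normalClosure (Or.inl ⟨i, rfl⟩)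
      have hmem2 : (a i)⁻¹ * φ (w i) ∈ N := by
        have := hNn.conj_mem _ (N.inv_mem hmem) (a i)⁻¹
        simpa [ht1, mul_assoc] using this
      have h3 : q (a i) = q (φ (w i)) :=
        (QuotientGroup.mk'_eq_mk' N).mpr ⟨_, hmem2, by group⟩
      rw [← hw i, h2, h3]
    intro x hx
    have : q x = 1 := by
      rw [← key]
      simp [MonoidHom.mem_ker.mp hx]
    rwa [hq, ← MonoidHom.mem_ker, QuotientGroup.ker_mk'] at this
  · -- N ≤ ker f
    apply Subgroup.normalClosure_le_normal
    rintro x (⟨i, rfl⟩ | ⟨k, rfl⟩) <;> simp only [ht1, ht2, SetLike.mem_coe, MonoidHom.mem_ker]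
    · rw [map_mul, map_inv, hfφ', hw, mul_inv_cancel]
    · rw [hfφ', hπrel]
end

section
/- Let (G_i)_{i∈ℕ} be an inverse sequence of finitely presented groups with bonding homomorphisms λ_i : G_i → G_{i−1} for i ≥ 1, and suppose that for every i ≥ 1 the range of λ_i equals the range of the composite λ_i ∘ λ_{i+1} (i.e. λ_i(G_i) = λ_i(λ_{i+1}(G_{i+1}))). Then there exist normal subgroups H_i ⊴ G_i for i ≥ 1 such that: (1) H_i is contained in ker(λ_i), so that λ_i induces a homomorphism G_i/H_i → G_{i−1}; (2) each quotient group G_i/H_i is finitely presented; and (3) for every i ≥ 2 the induced homomorphism μ_i : G_i/H_i → G_{i−1}/H_{i−1}, defined by μ_i(g H_i) = λ_i(g) H_{i−1}, is surjective. -/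
/-!
For `f : A →* B`, `g : B →* C` with `g(B) = g(f(A))` and `B` generated by a finite set `S`, choose
`y x ∈ A` with `g(f(y x)) = g(x)` for `x ∈ S`. The normal closure `N` of the finitely many elements
`x⁻¹ f(y x)` lies in `ker g`, so `B ⧸ N` is still finitely presented and the maps into later
quotients remain well defined; and `A → B ⧸ N` is surjective since its image contains every
generator.
-/

theorem finitelyPresentedGroup_iff_isFinitelyPresented {G : Type*} [Group G] :
    FinitelyPresentedGroup G ↔ Group.IsFinitelyPresented G := by
  constructor
  · rintro ⟨n, R, hR, ⟨e⟩⟩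
    have : Finite R := hR.to_subtype
    exact .equiv e.symm
  · intro _
    exact Group.IsFinitelyPresented.exists_mulEquiv_presentedGroup

theorem Group.IsFinitelyPresented.fg {G : Type*} [Group G] (h : Group.IsFinitelyPresented G) :
    Group.FG G := by
  obtain ⟨_, φ, hφ, -⟩ := h.out
  exact Group.fg_of_surjective hφ

theorem MonoidHom.surjective_of_subset_range {A B : Type*} [Group A] [Group B] (φ : A →* B)
    {S : Set B} (hS : Subgroup.closure S = ⊤) (h : S ⊆ φ.range) : Function.Surjective φ :=
  φ.range_eq_top.1 <| top_le_iff.1 <| hS ▸ (Subgroup.closure_le _).2 h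

theorem exists_finite_normalClosure_le_ker_of_range_eq {A B C : Type*} [Group A] [Group B]
    [Group C] [Group.FG B] (f : A →* B) (g : B →* C) (h : g.range = (g.comp f).range) :
    ∃ T : Set B, T.Finite ∧ Subgroup.normalClosure T ≤ g.ker ∧
      Function.Surjective ((QuotientGroup.mk' (Subgroup.normalClosure T)).comp f) := by
  obtain ⟨S, hS, hSfin⟩ := Group.fg_iff.1 ‹_›
  have hlift (x : B) : g x ∈ (g.comp f).range := h ▸ ⟨x, rfl⟩
  choose y hy using hlift
  set T := (fun x => x⁻¹ * f (y x)) '' S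
  refine ⟨T, hSfin.image _, ?_, ?_⟩
  · refine Subgroup.normalClosure_le_normal ?_
    rintro _ ⟨x, -, rfl⟩
    simp [← MonoidHom.comp_apply, hy]
  · set N := Subgroup.normalClosure T
    have hgen : Subgroup.closure (QuotientGroup.mk' N '' S) = ⊤ := by
      rw [← MonoidHom.map_closure, hS, ← MonoidHom.range_eq_map,
        MonoidHom.range_eq_top.2 (QuotientGroup.mk'_surjective N)]
    refine MonoidHom.surjective_of_subset_range _ hgen ?_
    rintro _ ⟨x, hx, rfl⟩
    refine ⟨y x, (QuotientGroup.eq.2 ?_).symm⟩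
    exact Subgroup.subset_normalClosure ⟨x, hx, rfl⟩

/-- `l i : G (i+1) →* G i` is the paper's `λ_{i+1}`, and `H i ⊴ G (i+1)` its `H_{i+1}`. -/
theorem semistable_pro_equivalent_to_surjective_sequence
    {G : ℕ → Type*} [∀ i, Group (G i)] (l : ∀ i, G (i + 1) →* G i)
    (hFP : ∀ i, FinitelyPresentedGroup (G i))
    (hML : ∀ i, (l i).range = ((l i).comp (l (i + 1))).range) :
    ∃ (H : ∀ i, Subgroup (G (i + 1))) (hN : ∀ i, (H i).Normal),
      (∀ i, H i ≤ (l i).ker) ∧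
      (∀ i, letI := hN i; FinitelyPresentedGroup (G (i + 1) ⧸ H i)) ∧
      (∀ i, letI := hN i; letI := hN (i + 1);
        ∃ μ : (G (i + 2) ⧸ H (i + 1)) →* (G (i + 1) ⧸ H i),
          (∀ g : G (i + 2), μ (QuotientGroup.mk g) = QuotientGroup.mk (l (i + 1) g)) ∧
          Function.Surjective μ) := by
  have hFP' i : Group.IsFinitelyPresented (G i) :=
    finitelyPresentedGroup_iff_isFinitelyPresented.1 (hFP i)
  have _ i : Group.FG (G i) := (hFP' i).fg
  choose T hTfin hTker hTsurj using
    fun i => exists_finite_normalClosure_le_ker_of_range_eq (l (i + 1)) (l i) (hML i)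
  refine ⟨fun i => Subgroup.normalClosure (T i), fun i => Subgroup.normalClosure_normal,
    hTker, fun i => ?_, fun i => ?_⟩
  · exact finitelyPresentedGroup_iff_isFinitelyPresented.2 <|
      Group.IsFinitelyPresented.quotient _ ⟨T i, hTfin i, rfl⟩
  · have hle := (hTker (i + 1)).trans ((l (i + 1)).ker_le_comap (Subgroup.normalClosure (T i)))
    exact ⟨QuotientGroup.map _ _ (l (i + 1)) hle, fun _ => rfl,
      Function.Surjective.of_comp (g := QuotientGroup.mk) (hTsurj i)⟩
end
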